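/- Let k₀ ≥ 1, μ ≥ 0, r ≥ 0, m = 2k₀ + μ, n = m + r. Let K₀ ∈ ℝ^{μ×μ} be symmetric invertible, let K̃ ∈ ℝ^{m×m} have block form (blocks of sizes k₀, μ, k₀): [[0, 0, I_{k₀}],[0, K₀, 0],[I_{k₀}, 0, 0]], let D ∈ ℝ^{r×r} be diagonal with each diagonal entry equal to 1 or −1, and let K = diag(K̃, D) ∈ ℝ^{n×n}. Suppose N is a maximal abelian Lie subalgebra of o(K̃) all of whose elements are nilpotent matrices, and suppose the common kernel ∩_{X∈N} ker X equals span{e_1,…,e_{k₀}} ⊆ ℝ^m. Let W = span{e_1,…,e_{k₀}} + span{e_{m+1},…,e_n} ⊆ ℝ^n. Then M = {E(diag(X, 0_r), α) : X ∈ N, α ∈ W} is a maximal abelian subalgebra of e(K). -/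

import Mathlib

open Matrix

/-- `o(K)`: real matrices `X` with `XK + KXᵀ = 0`. -/
def oK {ι : Type*} [Fintype ι] (K : Matrix ι ι ℝ) : Set (Matrix ι ι ℝ) :=
  {X | X * K + K * Xᵀ = 0}

/-- The extended matrix `E(X, a)` with block form `[[X, a], [0, 0]]`. -/
def Emat {ι : Type*} (X : Matrix ι ι ℝ) (a : ι → ℝ) :
    Matrix (ι ⊕ Unit) (ι ⊕ Unit) ℝ :=
  Matrix.fromBlocks X (Matrix.of fun i _ => a i) 0 0

/-- The Lie algebra `e(K)`, as a set of extended matrices. -/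
def eK {ι : Type*} [Fintype ι] (K : Matrix ι ι ℝ) :
    Set (Matrix (ι ⊕ Unit) (ι ⊕ Unit) ℝ) :=
  {m | ∃ X ∈ oK K, ∃ a : ι → ℝ, m = Emat X a}

/-- `M` is a maximal abelian subalgebra of the matrix Lie algebra (set) `L`:
it is a linear subspace contained in `L`, its elements pairwise commute, and
every element of `L` commuting with all of `M` belongs to `M`. -/
def IsMASA {κ : Type*} [Fintype κ] (L M : Set (Matrix κ κ ℝ)) : Prop :=
  M ⊆ L ∧
  (∀ X ∈ M, ∀ Y ∈ M, X * Y = Y * X) ∧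
  (0 : Matrix κ κ ℝ) ∈ M ∧
  (∀ X ∈ M, ∀ Y ∈ M, X + Y ∈ M) ∧
  (∀ (c : ℝ), ∀ X ∈ M, c • X ∈ M) ∧
  (∀ Y ∈ L, (∀ X ∈ M, Y * X = X * Y) → Y ∈ M)

/-- Index type with blocks of sizes `k₀, μ, k₀`. -/
abbrev Idx7 (k₀ μ : ℕ) := Fin k₀ ⊕ Fin μ ⊕ Fin k₀

/-- The metric `K̃ = [[0,0,I],[0,K₀,0],[I,0,0]]` with blocks of sizes `k₀, μ, k₀`. -/
def Ktil (k₀ μ : ℕ) (K₀ : Matrix (Fin μ) (Fin μ) ℝ) :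
    Matrix (Idx7 k₀ μ) (Idx7 k₀ μ) ℝ :=
  Matrix.of fun i j =>
    match i, j with
    | Sum.inl a, Sum.inr (Sum.inr b) => if a = b then 1 else 0
    | Sum.inr (Sum.inr a), Sum.inl b => if a = b then 1 else 0
    | Sum.inr (Sum.inl a), Sum.inr (Sum.inl b) => K₀ a b
    | _, _ => 0

/-!
Translations by `W` commute with every `diag(X, 0)`, `X ∈ N`, because `W` lies in the common
kernel of `N`; hence `M` is abelian. Conversely, let `E(Z, γ) ∈ e(K)` commute with `M`.
Commuting with the translations by `W ⊇ ℝ^r` forces the right column of blocks of `Z` to vanish,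
and then, `K̃` being invertible, `ZK + KZᵀ = 0` kills the lower-left block too, so `Z = diag(A, 0)`
with `A ∈ o(K̃)`. Commuting with `E(diag(X, 0), 0)` gives `AX = XA`, so `A ∈ N` by maximality of
`N`, and `Xγ = 0` for all `X ∈ N`, so `γ ∈ W`.
-/

section Emat

variable {ι : Type*}

theorem Emat_mul [Fintype ι] (A B : Matrix ι ι ℝ) (a b : ι → ℝ) :
    Emat A a * Emat B b = Emat (A * B) (A *ᵥ b) := by
  ext (i | i) (j | j) <;>
    simp [Emat, fromBlocks, mul_apply, mulVec, dotProduct, Fintype.sum_sum_type]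

theorem Emat_inj {A B : Matrix ι ι ℝ} {a b : ι → ℝ} :
    Emat A a = Emat B b ↔ A = B ∧ a = b := by
  refine ⟨fun h => ?_, fun ⟨hA, ha⟩ => hA ▸ ha ▸ rfl⟩
  obtain ⟨hA, hab, -, -⟩ := fromBlocks_inj.mp h
  exact ⟨hA, funext fun i => congrFun (congrFun hab i) ()⟩

theorem Emat_add (A B : Matrix ι ι ℝ) (a b : ι → ℝ) :
    Emat A a + Emat B b = Emat (A + B) (a + b) := by
  ext (i | i) (j | j) <;> simp [Emat]

theorem Emat_smul (c : ℝ) (A : Matrix ι ι ℝ) (a : ι → ℝ) :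
    c • Emat A a = Emat (c • A) (c • a) := by
  ext (i | i) (j | j) <;> simp [Emat]

theorem Emat_zero : Emat (0 : Matrix ι ι ℝ) 0 = 0 := by
  ext (i | i) (j | j) <;> simp [Emat]

theorem Emat_mul_comm_iff [Fintype ι] {A B : Matrix ι ι ℝ} {a b : ι → ℝ} :
    Emat A a * Emat B b = Emat B b * Emat A a ↔ A * B = B * A ∧ A *ᵥ b = B *ᵥ a := by
  rw [Emat_mul, Emat_mul, Emat_inj]

end Emat

section Blocks

variable {ι κ : Type*} [Fintype ι] [Fintype κ]

theorem fromBlocks_mem_oK_iff {K A : Matrix ι ι ℝ} {D E : Matrix κ κ ℝ}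
    {B : Matrix ι κ ℝ} {C : Matrix κ ι ℝ} :
    fromBlocks A B C E ∈ oK (fromBlocks K 0 0 D) ↔
      A ∈ oK K ∧ B * D + K * Cᵀ = 0 ∧ C * K + D * Bᵀ = 0 ∧ E ∈ oK D := by
  simp only [oK, Set.mem_ofPred_eq, fromBlocks_transpose, fromBlocks_multiply, fromBlocks_add,
    ← fromBlocks_zero, fromBlocks_inj]
  simp

theorem fromBlocks_zero_mulVec (X : Matrix ι ι ℝ) (v : ι ⊕ κ → ℝ) :
    fromBlocks X 0 0 (0 : Matrix κ κ ℝ) *ᵥ v = Sum.elim (X *ᵥ (v ∘ Sum.inl)) 0 := by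
  simp [fromBlocks_mulVec]

end Blocks

theorem Ktil_mulVec_injective {k₀ μ : ℕ} {K₀ : Matrix (Fin μ) (Fin μ) ℝ} (hK₀ : IsUnit K₀) :
    Function.Injective (Ktil k₀ μ K₀).mulVec := by
  intro v w h
  have hK₀ := mulVec_injective_iff_isUnit.mpr hK₀
  have hmid : (fun b => v (Sum.inr (Sum.inl b))) = fun b => w (Sum.inr (Sum.inl b)) := by
    apply hK₀
    funext a
    simpa [Ktil, mulVec, dotProduct, Fintype.sum_sum_type] using
      congrFun h (Sum.inr (Sum.inl a))
  funext i
  rcases i with a | a | a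
  · simpa [Ktil, mulVec, dotProduct, Fintype.sum_sum_type] using congrFun h (Sum.inr (Sum.inr a))
  · exact congrFun hmid a
  · simpa [Ktil, mulVec, dotProduct, Fintype.sum_sum_type] using congrFun h (Sum.inl a)

section Extension

variable {ι κ : Type*} [Fintype ι] [Fintype κ]

/-- The paper's `M = {E(diag(X, 0), α) : X ∈ N, α ∈ W}`, with `W` the vectors whose `ι`-part lies
in the common kernel of `N`. -/
def extendByKernel (N : Set (Matrix ι ι ℝ)) (κ : Type*) :
    Set (Matrix ((ι ⊕ κ) ⊕ Unit) ((ι ⊕ κ) ⊕ Unit) ℝ) :=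
  {m | ∃ X ∈ N, ∃ α : ι ⊕ κ → ℝ, (∀ Y ∈ N, Y *ᵥ (α ∘ Sum.inl) = 0) ∧
    m = Emat (fromBlocks X 0 0 0) α}

variable [DecidableEq ι] {K : Matrix ι ι ℝ} {D : Matrix κ κ ℝ} {N : Set (Matrix ι ι ℝ)}

theorem IsMASA.mem_extendByKernel_of_commute (hK : IsUnit K) (hN : IsMASA (oK K) N)
    {Y : Matrix ((ι ⊕ κ) ⊕ Unit) ((ι ⊕ κ) ⊕ Unit) ℝ} (hY : Y ∈ eK (fromBlocks K 0 0 D))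
    (hcomm : ∀ X ∈ extendByKernel N κ, Y * X = X * Y) : Y ∈ extendByKernel N κ := by
  obtain ⟨-, -, hN0, -, -, hNmax⟩ := hN
  obtain ⟨Z, hZ, γ, rfl⟩ := hY
  obtain ⟨A, B, C, E, rfl⟩ : ∃ A B C E, Z = fromBlocks A B C E :=
    ⟨_, _, _, _, (fromBlocks_toBlocks Z).symm⟩
  obtain ⟨hA, hBC, -, -⟩ := fromBlocks_mem_oK_iff.mp hZ
  have hBE : B = 0 ∧ E = 0 := by
    have hw : ∀ w : κ → ℝ, B *ᵥ w = 0 ∧ E *ᵥ w = 0 := fun w => by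
      have h := hcomm (Emat (fromBlocks 0 0 0 0) (Sum.elim 0 w))
        ⟨0, hN0, Sum.elim 0 w, fun Y _ => by simp, rfl⟩
      simpa [Emat_mul_comm_iff, fromBlocks_mulVec, eq_comm (a := (0 : ι ⊕ κ → ℝ)),
        ← Sum.elim_zero_zero, Sum.elim_eq_iff] using h
    exact ⟨ext_iff_mulVec.mpr fun w => by simp [(hw w).1],
      ext_iff_mulVec.mpr fun w => by simp [(hw w).2]⟩
  obtain ⟨rfl, rfl⟩ := hBE
  have hC : C = 0 := by
    have hKC : K * Cᵀ = 0 := by simpa using hBC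
    have h := nonsing_inv_mul_cancel_left K Cᵀ ((isUnit_iff_isUnit_det K).mp hK)
    rwa [hKC, Matrix.mul_zero, eq_comm, transpose_eq_zero] at h
  subst hC
  have hcommN : ∀ X ∈ N, A * X = X * A ∧ X *ᵥ (γ ∘ Sum.inl) = 0 := fun X hX => by
    have h := hcomm (Emat (fromBlocks X 0 0 0) 0) ⟨X, hX, 0, fun Y _ => by simp, rfl⟩
    simpa [Emat_mul_comm_iff, fromBlocks_multiply, fromBlocks_zero_mulVec, eq_comm,
      ← Sum.elim_zero_zero, Sum.elim_eq_iff] using h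
  exact ⟨A, hNmax A hA fun X hX => (hcommN X hX).1, γ, fun X hX => (hcommN X hX).2, rfl⟩

theorem IsMASA.extendByKernel (hK : IsUnit K) (D : Matrix κ κ ℝ) (hN : IsMASA (oK K) N) :
    IsMASA (eK (fromBlocks K 0 0 D)) (extendByKernel N κ) := by
  have hmax (Y) (hY : Y ∈ eK (fromBlocks K 0 0 D)) := hN.mem_extendByKernel_of_commute hK hY
  obtain ⟨hNsub, hNcomm, hN0, hNadd, hNsmul, -⟩ := hN
  refine ⟨?_, ?_, ?_, ?_, ?_, hmax⟩
  · rintro m ⟨X, hX, α, -, rfl⟩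
    exact ⟨_, fromBlocks_mem_oK_iff.mpr ⟨hNsub hX, by simp, by simp, by simp [oK]⟩, α, rfl⟩
  · rintro m₁ ⟨X, hX, α, hα, rfl⟩ m₂ ⟨Y, hY, β, hβ, rfl⟩
    rw [Emat_mul_comm_iff, fromBlocks_zero_mulVec, fromBlocks_zero_mulVec, hβ X hX, hα Y hY]
    simp [fromBlocks_multiply, hNcomm X hX Y hY]
  · exact ⟨0, hN0, 0, fun Y _ => by simp, by simp [Emat_zero]⟩
  · rintro m₁ ⟨X, hX, α, hα, rfl⟩ m₂ ⟨Y, hY, β, hβ, rfl⟩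
    refine ⟨X + Y, hNadd X hX Y hY, α + β, fun Z hZ => ?_, ?_⟩
    · change Z *ᵥ (α ∘ Sum.inl + β ∘ Sum.inl) = 0
      rw [mulVec_add, hα Z hZ, hβ Z hZ, add_zero]
    · rw [Emat_add, fromBlocks_add]; simp
  · rintro c m ⟨X, hX, α, hα, rfl⟩
    refine ⟨c • X, hNsmul c X hX, c • α, fun Z hZ => ?_, ?_⟩
    · change Z *ᵥ (c • (α ∘ Sum.inl)) = 0
      rw [mulVec_smul, hα Z hZ, smul_zero]
    · rw [Emat_smul, fromBlocks_smul]; simp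

end Extension

theorem stmt7_general (k₀ μ r : ℕ)
    (K₀ : Matrix (Fin μ) (Fin μ) ℝ) (hi : IsUnit K₀)
    (d : Fin r → ℝ)
    (N : Set (Matrix (Idx7 k₀ μ) (Idx7 k₀ μ) ℝ))
    (hN : IsMASA (oK (Ktil k₀ μ K₀)) N)
    (hker : {v : Idx7 k₀ μ → ℝ | ∀ X ∈ N, X.mulVec v = 0} =
      {v | (∀ a : Fin μ, v (Sum.inr (Sum.inl a)) = 0) ∧
           (∀ a : Fin k₀, v (Sum.inr (Sum.inr a)) = 0)}) :
    IsMASA (eK (Matrix.fromBlocks (Ktil k₀ μ K₀) 0 0 (Matrix.diagonal d)))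
      {m | ∃ X ∈ N, ∃ α : Idx7 k₀ μ ⊕ Fin r → ℝ,
        ((∀ a : Fin μ, α (Sum.inl (Sum.inr (Sum.inl a))) = 0) ∧
         (∀ a : Fin k₀, α (Sum.inl (Sum.inr (Sum.inr a))) = 0)) ∧
        m = Emat (Matrix.fromBlocks X 0 0 0) α} := by
  have hKtil : IsUnit (Ktil k₀ μ K₀) := mulVec_injective_iff_isUnit.mp (Ktil_mulVec_injective hi)
  simp only [Set.ext_iff, Set.mem_ofPred_eq] at hker
  simpa only [extendByKernel, hker, Function.comp_apply] using
    hN.extendByKernel hKtil (diagonal d)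

/-- If `N` is a nilpotent MASA (MANS) of `o(K̃)` whose common kernel is the span of the
first `k₀` coordinate vectors, then `M = {E(diag(X,0), α) : X ∈ N, α ∈ W}` is a MASA
of `e(K)`, `K = diag(K̃, D)`. -/
theorem stmt7 (k₀ μ r : ℕ) (hk₀ : 1 ≤ k₀)
    (K₀ : Matrix (Fin μ) (Fin μ) ℝ) (hs : K₀ᵀ = K₀) (hi : IsUnit K₀)
    (d : Fin r → ℝ) (hd : ∀ i, d i = 1 ∨ d i = -1)
    (N : Set (Matrix (Idx7 k₀ μ) (Idx7 k₀ μ) ℝ))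
    (hN : IsMASA (oK (Ktil k₀ μ K₀)) N)
    (hnil : ∀ X ∈ N, IsNilpotent X)
    (hker : {v : Idx7 k₀ μ → ℝ | ∀ X ∈ N, X.mulVec v = 0} =
      {v | (∀ a : Fin μ, v (Sum.inr (Sum.inl a)) = 0) ∧
           (∀ a : Fin k₀, v (Sum.inr (Sum.inr a)) = 0)}) :
    IsMASA (eK (Matrix.fromBlocks (Ktil k₀ μ K₀) 0 0 (Matrix.diagonal d)))
      {m | ∃ X ∈ N, ∃ α : Idx7 k₀ μ ⊕ Fin r → ℝ,
        ((∀ a : Fin μ, α (Sum.inl (Sum.inr (Sum.inl a))) = 0) ∧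
         (∀ a : Fin k₀, α (Sum.inl (Sum.inr (Sum.inr a))) = 0)) ∧
        m = Emat (Matrix.fromBlocks X 0 0 0) α} :=
  stmt7_general k₀ μ r K₀ hi d N hN hker
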